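/- arXiv:1212.3675 — 6 statements merged into one kernel-verified Lean document; each statement's English description precedes it below -/
import Mathlib

section
/- For every natural number n, the n+1 polynomials P_{n,0}, P_{n,1}, …, P_{n,n} form a basis of the ℚ-vector space of polynomials of degree at most n. -/
open Polynomial

/-- The binomial coefficient polynomial `C(x,k) = x(x-1)⋯(x-k+1)/k!` in `ℚ[X]`. -/
noncomputable def binomialPoly (k : ℕ) : Polynomial ℚ :=
  (k.factorial : ℚ)⁻¹ • descPochhammer ℚ k

/-- The polynomial `P_{n,i}(d) = (-1)^i · C(-d, i) · C(d+n, n-i)`. -/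
noncomputable def Pni (n i : ℕ) : Polynomial ℚ :=
  (-1 : ℚ) ^ i •
    ((binomialPoly i).comp (-Polynomial.X) *
      (binomialPoly (n - i)).comp (Polynomial.X + Polynomial.C (n : ℚ)))

lemma binomialPoly_eval_nat (k j : ℕ) :
    (binomialPoly k).eval (j : ℚ) = (j.choose k : ℚ) := by
  rw [binomialPoly, eval_smul, smul_eq_mul, descPochhammer_eval_eq_descFactorial,
    Nat.descFactorial_eq_factorial_mul_choose, Nat.cast_mul]
  field_simp

lemma binomialPoly_natDegree_le (k : ℕ) : (binomialPoly k).natDegree ≤ k := by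
  refine (natDegree_smul_le _ _).trans ?_
  rw [descPochhammer_natDegree]

lemma Pni_natDegree_le (n i : ℕ) (h : i ≤ n) : (Pni n i).natDegree ≤ n := by
  refine (natDegree_smul_le _ _).trans <| (natDegree_mul_le).trans ?_
  have h1 : ((binomialPoly i).comp (-Polynomial.X)).natDegree ≤ i := by
    refine (natDegree_comp_le).trans ?_
    simpa using Nat.mul_le_mul_right 1 (binomialPoly_natDegree_le i)
  have h2 : ((binomialPoly (n - i)).comp
      (Polynomial.X + Polynomial.C (n : ℚ))).natDegree ≤ n - i := by
    refine (natDegree_comp_le).trans ?_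
    rw [natDegree_X_add_C]
    simpa using binomialPoly_natDegree_le (n - i)
  omega

lemma Pni_mem_degreeLE (n i : ℕ) (h : i ≤ n) : Pni n i ∈ Polynomial.degreeLE ℚ (n : ℕ) := by
  rw [Polynomial.mem_degreeLE]
  exact (degree_le_natDegree).trans (by exact_mod_cast Pni_natDegree_le n i h)

lemma Pni_eval (n i j : ℕ) (hj : j ≤ n) :
    (Pni n i).eval (-(j : ℚ)) =
      (-1 : ℚ) ^ i * (j.choose i : ℚ) * ((n - j).choose (n - i) : ℚ) := by
  have hnj : ((n : ℚ) - j) = ((n - j : ℕ) : ℚ) := by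
    rw [Nat.cast_sub hj]
  rw [Pni, eval_smul, smul_eq_mul, eval_mul, eval_comp, eval_comp]
  simp only [eval_neg, eval_X, eval_add, eval_C, neg_neg]
  rw [neg_add_eq_sub, hnj, binomialPoly_eval_nat, binomialPoly_eval_nat, mul_assoc]

lemma Pni_eval_delta (n : ℕ) (i j : Fin (n + 1)) :
    (Pni n i).eval (-(j : ℚ)) = if i = j then (-1 : ℚ) ^ (i : ℕ) else 0 := by
  have hj : (j : ℕ) ≤ n := Nat.lt_succ_iff.mp j.isLt
  have hi : (i : ℕ) ≤ n := Nat.lt_succ_iff.mp i.isLt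
  rw [Pni_eval n i j hj]
  rcases lt_trichotomy (i : ℕ) (j : ℕ) with h | h | h
  · rw [if_neg (by intro he; rw [he] at h; exact lt_irrefl _ h)]
    have : (n - (j : ℕ)) < (n - (i : ℕ)) := by omega
    rw [Nat.choose_eq_zero_of_lt this]
    simp
  · rw [if_pos (Fin.ext h)]
    rw [h, Nat.choose_self, Nat.choose_self]
    simp
  · rw [if_neg (by intro he; rw [he] at h; exact lt_irrefl _ h)]
    rw [Nat.choose_eq_zero_of_lt h]
    simp

lemma Pni_linearIndependent (n : ℕ) :
    LinearIndependent ℚ (fun i : Fin (n + 1) => Pni n i) := by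
  rw [Fintype.linearIndependent_iff]
  intro g hg j
  have := congrArg (fun p => Polynomial.eval (-(j : ℚ)) p) hg
  simp only [eval_finset_sum, eval_smul, smul_eq_mul, eval_zero] at this
  rw [Finset.sum_congr rfl (fun i _ => by rw [Pni_eval_delta n i j])] at this
  simp only [mul_ite, mul_zero, Finset.sum_ite_eq', Finset.mem_univ, if_pos] at this
  have hne : ((-1 : ℚ) ^ (j : ℕ)) ≠ 0 := by positivity
  exact (mul_eq_zero.mp this).resolve_right hne

/-- The polynomials `P_{n,0}, …, P_{n,n}` form a basis of the `ℚ`-vector space of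
polynomials of degree at most `n`: they are linearly independent and span the
submodule of polynomials of degree `≤ n`. -/
theorem Pni_basis (n : ℕ) :
    LinearIndependent ℚ (fun i : Fin (n + 1) => Pni n i) ∧
    Submodule.span ℚ (Set.range (fun i : Fin (n + 1) => Pni n i)) =
      Polynomial.degreeLE ℚ (n : ℕ) := by
  refine ⟨Pni_linearIndependent n, ?_⟩
  set W := Polynomial.degreeLE ℚ (n : ℕ) with hW
  have hmem : ∀ i : Fin (n + 1), Pni n i ∈ W := fun i =>
    Pni_mem_degreeLE n i (Nat.lt_succ_iff.mp i.isLt)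
  set v : Fin (n + 1) → W := fun i => ⟨Pni n i, hmem i⟩ with hv
  have hli : LinearIndependent ℚ v := by
    apply LinearIndependent.of_comp W.subtype
    exact Pni_linearIndependent n
  have hfin : Module.finrank ℚ W = n + 1 := by
    rw [hW, ← Polynomial.degreeLT_succ_eq_degreeLE]
    rw [LinearEquiv.finrank_eq (Polynomial.degreeLTEquiv ℚ (n + 1))]
    simp
  have hspan : Submodule.span ℚ (Set.range v) = ⊤ := by
    apply hli.span_eq_top_of_card_eq_finrank
    simp [hfin]
  have : Set.range (fun i : Fin (n + 1) => Pni n i) = W.subtype '' Set.range v := by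
    rw [← Set.range_comp]
    rfl
  rw [this, ← Submodule.map_span, hspan, Submodule.map_subtype_top]
end

section
/- For all natural numbers n ≥ 1 and i with 0 ≤ i ≤ n-1, one has the polynomial identity P_{n-1,i} = P_{n,i} - binom(n,i) · P_{n,n}, where binom(n,i) is the ordinary binomial coefficient. -/
open Polynomial

lemma desc_comp_neg (k : ℕ) :
    (descPochhammer ℚ k).comp (-X) = ((-1 : ℚ) ^ k) • ascPochhammer ℚ k := by
  induction k with
  | zero => simp
  | succ k ih =>
    rw [descPochhammer_succ_right, mul_comp, sub_comp, X_comp, natCast_comp, ih,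
      ascPochhammer_succ_right]
    simp only [smul_eq_C_mul, map_pow, map_neg, map_one]
    ring

lemma desc_comp_add (k : ℕ) (c : ℚ) :
    (descPochhammer ℚ k).comp (X + C c) =
      (ascPochhammer ℚ k).comp (X + C (c - k + 1)) := by
  have h : descPochhammer ℚ k = (ascPochhammer ℚ k).comp ((X : ℚ[X]) - (k : ℚ[X]) + 1) := by
    have := congrArg (Polynomial.map (Int.castRingHom ℚ)) (descPochhammer_eq_ascPochhammer k)
    simpa [descPochhammer_map, map_comp, ascPochhammer_map, Polynomial.map_add,
      Polynomial.map_sub, Polynomial.map_one] using this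
  rw [h, comp_assoc]
  congr 1
  rw [add_comp, sub_comp, X_comp, natCast_comp, one_comp]
  simp only [map_add, map_sub, map_one, Polynomial.C_eq_natCast]
  ring

lemma Pni_eq (n i m : ℕ) (h : n = i + m) :
    Pni n i = ((i.factorial : ℚ)⁻¹ * (m.factorial : ℚ)⁻¹) •
      (ascPochhammer ℚ i * (ascPochhammer ℚ m).comp (X + C ((i : ℚ) + 1))) := by
  subst h
  rw [Pni, binomialPoly, binomialPoly, Nat.add_sub_cancel_left, smul_comp, smul_comp,
    desc_comp_neg, desc_comp_add,
    show (((i + m : ℕ) : ℚ)) - (m : ℚ) + 1 = (i : ℚ) + 1 by push_cast; ring,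
    smul_smul, smul_mul_smul_comm, smul_smul]
  congr 1
  rw [show (-1 : ℚ) ^ i * ((i.factorial : ℚ)⁻¹ * (-1 : ℚ) ^ i * (m.factorial : ℚ)⁻¹)
      = ((-1 : ℚ) ^ i * (-1 : ℚ) ^ i) * ((i.factorial : ℚ)⁻¹ * (m.factorial : ℚ)⁻¹) by ring,
    ← mul_pow]
  norm_num

/-- For `n ≥ 1` and `0 ≤ i ≤ n-1`, one has `P_{n-1,i} = P_{n,i} - binom(n,i) · P_{n,n}`. -/
theorem Pni_pred (n i : ℕ) (hn : 1 ≤ n) (hi : i ≤ n - 1) :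
    Pni (n - 1) i = Pni n i - (n.choose i : ℚ) • Pni n n := by
  obtain ⟨m, rfl⟩ : ∃ m, n = i + m + 1 := ⟨n - 1 - i, by omega⟩
  rw [show i + m + 1 - 1 = i + m by omega, Pni_eq (i + m) i m rfl,
    Pni_eq (i + m + 1) i (m + 1) rfl, Pni_eq (i + m + 1) (i + m + 1) 0 (by omega)]
  set A := ascPochhammer ℚ i with hA
  set B := (ascPochhammer ℚ m).comp (X + C ((i : ℚ) + 1)) with hB
  have F1 : (ascPochhammer ℚ (m + 1)).comp (X + C ((i : ℚ) + 1))
      = B * (X + C ((i : ℚ) + (m : ℚ) + 1)) := by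
    rw [ascPochhammer_succ_right, mul_comp, add_comp, X_comp, natCast_comp, hB]
    simp only [Polynomial.C_eq_natCast, map_add, map_natCast, map_one]
    ring
  have F2 : ascPochhammer ℚ (i + m + 1) = A * ((X + C (i : ℚ)) * B) := by
    have h1 : ascPochhammer ℚ i * (ascPochhammer ℚ (m + 1)).comp (X + (i : ℚ[X]))
        = ascPochhammer ℚ (i + (m + 1)) := ascPochhammer_mul ℚ i (m + 1)
    have h2 : (ascPochhammer ℚ (m + 1)).comp (X + (i : ℚ[X]))
        = (X + C (i : ℚ)) * B := by
      rw [ascPochhammer_succ_left, mul_comp, comp_assoc, X_comp, add_comp, X_comp, one_comp, hB]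
      simp only [Polynomial.C_eq_natCast, map_add, map_natCast, map_one]
      ring_nf
    rw [show i + m + 1 = i + (m + 1) by ring, ← h1, h2, hA]
  rw [F1, F2]
  have hfi : (i.factorial : ℚ) ≠ 0 := Nat.cast_ne_zero.mpr i.factorial_ne_zero
  have hfm : (m.factorial : ℚ) ≠ 0 := Nat.cast_ne_zero.mpr m.factorial_ne_zero
  have hfm1 : ((m + 1).factorial : ℚ) ≠ 0 := Nat.cast_ne_zero.mpr (m + 1).factorial_ne_zero
  have hfn : ((i + m + 1).factorial : ℚ) ≠ 0 := Nat.cast_ne_zero.mpr (i + m + 1).factorial_ne_zero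
  have hch : ((i + m + 1).choose i : ℚ) * ((i + m + 1).factorial : ℚ)⁻¹
      = (i.factorial : ℚ)⁻¹ * ((m + 1).factorial : ℚ)⁻¹ := by
    have h := Nat.choose_mul_factorial_mul_factorial (show i ≤ i + m + 1 by omega)
    rw [show i + m + 1 - i = m + 1 by omega] at h
    have h' : ((i + m + 1).choose i : ℚ) * (i.factorial : ℚ) * ((m + 1).factorial : ℚ)
        = ((i + m + 1).factorial : ℚ) := by exact_mod_cast congrArg (Nat.cast : ℕ → ℚ) h
    field_simp
    linear_combination h'
  have hfac : (i.factorial : ℚ)⁻¹ * (m.factorial : ℚ)⁻¹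
      = ((i.factorial : ℚ)⁻¹ * ((m + 1).factorial : ℚ)⁻¹) * ((m : ℚ) + 1) := by
    rw [Nat.factorial_succ]
    push_cast
    field_simp
  simp only [smul_eq_C_mul, smul_smul]
  rw [Nat.factorial_zero]
  push_cast

  simp only [ascPochhammer_zero, one_comp, mul_one, inv_one]
  rw [hfac, ← hch]
  simp only [map_mul, map_add, map_one, map_natCast]
  ring
end

section
/- For all natural numbers n and i with 0 ≤ i ≤ n, one has the polynomial identity P_{n,i}(-n-d) = (-1)^n · P_{n,n-i}(d), i.e. the composition of P_{n,i} with the substitution d ↦ -n-d equals (-1)^n times P_{n,n-i}. -/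
open Polynomial

/-- For `0 ≤ i ≤ n`, one has the polynomial identity `P_{n,i}(-n-d) = (-1)^n · P_{n,n-i}(d)`:
the composition of `P_{n,i}` with the substitution `d ↦ -n-d` equals `(-1)^n` times
`P_{n,n-i}`. -/
theorem Pni_comp_neg (n i : ℕ) (hi : i ≤ n) :
    (Pni n i).comp (-Polynomial.C (n : ℚ) - Polynomial.X) = (-1 : ℚ) ^ n • Pni n (n - i) := by
  simp only [Pni, Nat.sub_sub_self hi, smul_comp, mul_comp, comp_assoc]
  have h1 : (-Polynomial.X).comp (-Polynomial.C (n : ℚ) - Polynomial.X)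
      = Polynomial.X + Polynomial.C (n : ℚ) := by
    simp [neg_comp]
  have h2 : (Polynomial.X + Polynomial.C (n : ℚ)).comp (-Polynomial.C (n : ℚ) - Polynomial.X)
      = -Polynomial.X := by
    simp [add_comp]; ring
  rw [h1, h2, smul_smul, ← pow_add]
  rw [show n + (n - i) = 2 * n - i by omega]
  rw [mul_comm]
  congr 1
  rw [show (2*n - i) = 2*(n-i) + i by omega, pow_add, pow_mul]
  norm_num
end

section
/- Let n and b be natural numbers with b ≤ n, let α_0, …, α_n be rational numbers, and set P = Σ_{i=0}^n α_i P_{n,i}. Then P has degree at most n-b if and only if for every j with 0 ≤ j ≤ b-1 one has Σ_{i=0}^{n-j} α_i · binom(n-j, i) = 0, where binom denotes the ordinary binomial coefficient. -/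
/-! The polynomials `M_m(d) = C(d+m-1, m)` have degree exactly `m`, so they form a triangular
basis of `ℚ[X]`. Since `P_{n,i} = C(d+i-1, i) · C(d+n, n-i) = ∑_{m ≤ n} C(m, i) M_m` (a binomial
identity, checked at the infinitely many points `d = e + 1`), one gets
`∑ α_i P_{n,i} = ∑_{m ≤ n} S_m M_m` with `S_m = ∑_i α_i C(m, i)`. By triangularity the degree is
at most `n - b` iff `S_m = 0` for `n - b < m ≤ n`, that is, `S_{n-j} = 0` for `j < b`. -/

open Polynomial

open Finset

-- Both sides equal `(a + b + c)! / (a! b! c!)`.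
theorem Nat.add_choose_mul_add_add_choose (a b c : ℕ) :
    (c + a).choose a * (c + a + b).choose b = (a + b).choose a * (c + a + b).choose (a + b) := by
  have h := Nat.choose_mul (n := c + a + b) (Nat.le_add_left b a)
  rw [Nat.add_sub_cancel, Nat.add_sub_cancel, ← Nat.choose_symm_add] at h
  rw [mul_comm, ← h, mul_comm]

theorem Nat.add_choose_mul_choose_eq_sum (e i k : ℕ) :
    (e + i).choose i * (e + i + 1 + k).choose k =
      ∑ m ∈ range (i + k + 1), m.choose i * (e + m).choose m := by
  induction k with
  | zero =>
    rw [Nat.choose_zero_right, mul_one, Nat.add_zero, sum_range_succ,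
      sum_eq_zero fun m hm => by rw [Nat.choose_eq_zero_of_lt (mem_range.mp hm), zero_mul],
      Nat.choose_self, one_mul, zero_add]
  | succ k ih =>
    rw [← add_assoc, Nat.choose_succ_succ', mul_add, ih, ← add_assoc i k 1,
      sum_range_succ _ (i + k + 1)]
    congr 1
    convert Nat.add_choose_mul_add_add_choose i (k + 1) e using 2 <;> ring_nf

theorem Polynomial.degree_sum_smul_le_iff {R : Type*} [Semiring R] [NoZeroDivisors R]
    {f : ℕ → R[X]} (hf : ∀ m, (f m).degree = m) (c : ℕ → R) (s : Finset ℕ) (k : ℕ) :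
    (∑ m ∈ s, c m • f m).degree ≤ k ↔ ∀ m ∈ s, k < m → c m = 0 := by
  have hdeg : ∀ m, c m ≠ 0 → (c m • f m).degree = m := fun m hm => by
    rw [smul_eq_C_mul, degree_C_mul hm, hf]
  rw [degree_sum_eq_of_disjoint, Finset.sup_le_iff]
  · refine forall₂_congr fun m _ => ?_
    by_cases hm : c m = 0
    · simp [hm]
    · rw [hdeg m hm, Nat.cast_le]
      simp [hm]
  · rintro i ⟨-, hi⟩ j ⟨-, hj⟩ hij
    simp only [Function.onFun, Function.comp_apply]
    rw [hdeg i (left_ne_zero_of_smul hi), hdeg j (left_ne_zero_of_smul hj)]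
    exact_mod_cast hij

section multichoosePoly

variable (m : ℕ)

-- `M_m(d) = d(d+1)⋯(d+m-1)/m! = C(d+m-1, m)`.
noncomputable def multichoosePoly : ℚ[X] :=
  (m.factorial : ℚ)⁻¹ • ascPochhammer ℚ m

theorem degree_multichoosePoly : (multichoosePoly m).degree = m := by
  rw [multichoosePoly, smul_eq_C_mul, degree_C_mul (by positivity),
    degree_eq_natDegree (monic_ascPochhammer ℚ m).ne_zero, ascPochhammer_natDegree]

theorem eval_multichoosePoly_natCast_add_one (e : ℕ) :
    (multichoosePoly m).eval ((e : ℚ) + 1) = ((e + m).choose m : ℚ) := by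
  rw [multichoosePoly, eval_smul, ← Nat.cast_succ, ascPochhammer_nat_eq_natCast_ascFactorial,
    Nat.ascFactorial_eq_factorial_mul_choose, Nat.cast_mul, smul_eq_mul, inv_mul_cancel_left₀]
  positivity

theorem neg_one_pow_smul_binomialPoly_comp_neg :
    (-1 : ℚ) ^ m • (binomialPoly m).comp (-X) = multichoosePoly m := by
  refine Polynomial.funext fun r => ?_
  have h := ascPochhammer_eval_neg_eq_descPochhammer ℚ (-r) m
  rw [neg_neg] at h
  simp only [binomialPoly, multichoosePoly, smul_comp, eval_smul, eval_comp, eval_neg, eval_X, h,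
    smul_eq_mul]
  ring_nf

end multichoosePoly

theorem eval_binomialPoly_natCast (k a : ℕ) : (binomialPoly k).eval (a : ℚ) = a.choose k := by
  rw [binomialPoly, eval_smul, smul_eq_mul, descPochhammer_eval_eq_descFactorial,
    Nat.descFactorial_eq_factorial_mul_choose, Nat.cast_mul, inv_mul_cancel_left₀]
  positivity

theorem Pni_eq_multichoosePoly_mul (n i : ℕ) :
    Pni n i = multichoosePoly i * (binomialPoly (n - i)).comp (X + C (n : ℚ)) := by
  rw [Pni, ← smul_mul_assoc, neg_one_pow_smul_binomialPoly_comp_neg]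

theorem Pni_eq_sum_multichoosePoly {n i : ℕ} (hi : i ≤ n) :
    Pni n i = ∑ m ∈ range (n + 1), (m.choose i : ℚ) • multichoosePoly m := by
  obtain ⟨k, rfl⟩ := Nat.exists_eq_add_of_le hi
  refine eq_of_infinite_eval_eq _ _ ((Set.infinite_range_of_injective
    fun a b h => by simpa using h : (Set.range fun e : ℕ => (e : ℚ) + 1).Infinite).mono ?_)
  rintro _ ⟨e, rfl⟩
  simp only [Set.mem_ofPred_eq, Pni_eq_multichoosePoly_mul, eval_mul, eval_comp, eval_add, eval_X,
    eval_C, eval_finsetSum, eval_smul, smul_eq_mul, eval_multichoosePoly_natCast_add_one,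
    Nat.add_sub_cancel_left]
  rw [show (e : ℚ) + 1 + ↑(i + k) = ↑(e + i + 1 + k) by push_cast; ring,
    eval_binomialPoly_natCast]
  exact_mod_cast Nat.add_choose_mul_choose_eq_sum e i k

theorem sum_smul_Pni_eq (n : ℕ) (α : ℕ → ℚ) :
    ∑ i ∈ range (n + 1), α i • Pni n i =
      ∑ m ∈ range (n + 1), (∑ i ∈ range (m + 1), α i * (m.choose i : ℚ)) • multichoosePoly m := by
  calc ∑ i ∈ range (n + 1), α i • Pni n i
      = ∑ i ∈ range (n + 1), ∑ m ∈ range (n + 1), (α i * (m.choose i : ℚ)) • multichoosePoly m :=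
        sum_congr rfl fun i hi => by
          rw [Pni_eq_sum_multichoosePoly (Nat.lt_succ_iff.mp (mem_range.mp hi)), smul_sum]
          simp only [smul_smul]
    _ = ∑ m ∈ range (n + 1), (∑ i ∈ range (n + 1), α i * (m.choose i : ℚ)) • multichoosePoly m := by
        rw [sum_comm]
        simp only [sum_smul]
    _ = _ := sum_congr rfl fun m hm => by
        congr 1
        refine (sum_subset (range_subset_range.mpr (mem_range.mp hm)) fun i _ hi => ?_).symm
        rw [Nat.choose_eq_zero_of_lt (by simpa using hi), Nat.cast_zero, mul_zero]

/-- Let `b ≤ n` and `P = Σ_{i=0}^n α_i P_{n,i}`. Then `P` has degree at most `n - b`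
if and only if `Σ_{i=0}^{n-j} α_i · binom(n-j, i) = 0` for every `0 ≤ j ≤ b-1`. -/
theorem Pni_degree_le_iff (n b : ℕ) (hb : b ≤ n) (α : ℕ → ℚ) :
    (∑ i ∈ Finset.range (n + 1), α i • Pni n i).degree ≤ ((n - b : ℕ) : WithBot ℕ) ↔
    ∀ j < b, ∑ i ∈ Finset.range (n - j + 1), α i * ((n - j).choose i : ℚ) = 0 := by
  rw [sum_smul_Pni_eq, degree_sum_smul_le_iff degree_multichoosePoly]
  constructor
  · intro h j hj
    exact h (n - j) (mem_range.mpr (by omega)) (by omega)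
  · intro h m hm hbm
    rw [mem_range] at hm
    simpa [Nat.sub_sub_self (Nat.lt_succ_iff.mp hm)] using h (n - m) (by omega)
end

section
/- Let n and b be natural numbers with b ≤ n, let α_0, …, α_n be rational numbers, and set P = Σ_{i=0}^n α_i P_{n,i}. Then P has degree at most n-b if and only if for every j with 0 ≤ j ≤ b-1 one has Σ_{i=j}^{n} α_i · binom(n-j, i-j) = 0, where binom denotes the ordinary binomial coefficient. -/
open Polynomial

/-!
Write `Q_k = C(X + n, k)`, a polynomial of degree exactly `k`. Since
`P_{n,i} = C(X+i-1, i) C(X+n, n-i)`, the identity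
`C(n-j, n-i) C(r, n-j) = C(r, n-i) C(r-n+i, i-j)` together with a partial alternating sum of
binomial coefficients gives
`P_{n,i} = Σ_{j ≤ i} (-1)^j C(n-j, i-j) Q_{n-j}`. Hence `Σ_i α_i P_{n,i} = Σ_j (-1)^j S_j Q_{n-j}`,
where `S_j` are the sums in the statement, and because the `Q_k` form a triangular basis the degree
is at most `n - b` exactly when `S_j = 0` for `j < b`.
-/

open Finset

section
variable {R : Type*} [Semiring R] {Q : ℕ → R[X]}

theorem degree_sum_range_smul_lt (hQ : ∀ k, (Q k).degree ≤ k) (c : ℕ → R) (N : ℕ) :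
    (∑ k ∈ range N, c k • Q k).degree < N :=
  (degree_sum_le _ _).trans_lt <| (Finset.sup_lt_iff (WithBot.bot_lt_coe N)).2 fun k hk =>
    (degree_smul_le _ _).trans_lt <| (hQ k).trans_lt <| WithBot.coe_lt_coe.2 (mem_range.1 hk)

theorem degree_sum_range_smul_le_iff [NoZeroDivisors R] (hQ : ∀ k, (Q k).degree = k)
    (c : ℕ → R) (m N : ℕ) :
    (∑ k ∈ range N, c k • Q k).degree ≤ m ↔ ∀ k < N, m < k → c k = 0 := by
  induction N with
  | zero => simp
  | succ N ih =>
    have hlt := degree_sum_range_smul_lt (fun k => (hQ k).le) c N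
    rw [sum_range_succ]
    constructor
    · intro h
      have hcN : m < N → c N = 0 := fun hmN => by
        have hcoeff := coeff_eq_zero_of_degree_lt (h.trans_lt (WithBot.coe_lt_coe.2 hmN))
        rw [coeff_add, coeff_eq_zero_of_degree_lt hlt, zero_add, coeff_smul, smul_eq_mul] at hcoeff
        exact (mul_eq_zero.1 hcoeff).resolve_right (coeff_ne_zero_of_eq_degree (hQ N))
      have hS : (∑ k ∈ range N, c k • Q k).degree ≤ m := by
        by_cases hmN : m < N
        · simpa [hcN hmN] using h
        · exact hlt.le.trans (by exact_mod_cast not_lt.1 hmN)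
      intro k hk hmk
      rcases (Nat.lt_succ_iff.1 hk).lt_or_eq with hk | rfl
      exacts [ih.1 hS k hk hmk, hcN hmk]
    · intro h
      refine (degree_add_le _ _).trans (max_le (ih.2 fun k hk => h k (by omega)) ?_)
      by_cases hmN : m < N
      · simp [h N (lt_add_one N) hmN]
      · exact (degree_smul_le _ _).trans ((hQ N).le.trans (by exact_mod_cast not_lt.1 hmN))

end

namespace Ring
variable {R : Type*} [CommRing R] [BinomialRing R]

theorem alternating_sum_range_choose_add_one (r : R) (m : ℕ) :
    ∑ k ∈ range (m + 1), (-1) ^ k * choose (r + 1) k = (-1) ^ m * choose r m := by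
  induction m with
  | zero => simp
  | succ m ih =>
    rw [sum_range_succ, ih, choose_succ_succ]
    ring

theorem alternating_sum_range_choose_add_one_tsub (r : R) (i : ℕ) :
    ∑ j ∈ range (i + 1), (-1) ^ j * choose (r + 1) (i - j) = choose r i := by
  have hsign : ∀ k ∈ range (i + 1), (-1 : R) ^ (i - k) * choose (r + 1) (i - (i - k)) =
      (-1) ^ i * ((-1) ^ k * choose (r + 1) k) := by
    intro k hk
    obtain ⟨t, rfl⟩ := Nat.exists_eq_add_of_le (mem_range_succ_iff.1 hk)
    rw [Nat.add_sub_cancel_left, Nat.add_sub_cancel, ← mul_assoc, ← pow_add, add_right_comm,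
      pow_add, Even.neg_one_pow ⟨k, rfl⟩, one_mul]
  rw [← sum_range_reflect, add_tsub_cancel_right, sum_congr rfl hsign, ← mul_sum,
    alternating_sum_range_choose_add_one, ← mul_assoc, ← pow_add, Even.neg_one_pow ⟨i, rfl⟩,
    one_mul]

theorem alternating_sum_choose_mul_choose_add (r : R) {n i : ℕ} (h : i ≤ n) :
    ∑ j ∈ range (i + 1), (-1) ^ j * (n - j).choose (i - j) * choose (r + n) (n - j) =
      choose (r + i - 1) i * choose (r + n) (n - i) := by
  have hterm : ∀ j ∈ range (i + 1), (-1) ^ j * (n - j).choose (i - j) * choose (r + n) (n - j) =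
      choose (r + n) (n - i) * ((-1) ^ j * choose (r + i) (i - j)) := by
    intro j hj
    have hj : j ≤ i := mem_range_succ_iff.1 hj
    have := choose_smul_choose (r + n) (n := n - j) (k := n - i) (by omega)
    rw [Nat.cast_sub h, show r + n - (n - i : R) = r + i by ring,
      show n - j - (n - i) = i - j by omega, nsmul_eq_mul] at this
    rw [Nat.choose_symm_of_eq_add (by omega : n - j = (i - j) + (n - i)), mul_assoc, this]
    ring
  have hsum := alternating_sum_range_choose_add_one_tsub (r + i - 1) i
  rw [sub_add_cancel] at hsum
  rw [sum_congr rfl hterm, ← mul_sum, hsum, mul_comm]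

end Ring

theorem binomialPoly_comp (k : ℕ) (p : ℚ[X]) : (binomialPoly k).comp p = Ring.choose p k := by
  have hk : (k.factorial : ℚ) ≠ 0 := by positivity
  rw [binomialPoly, smul_comp, inv_smul_eq_iff₀ hk, Nat.cast_smul_eq_nsmul,
    ← Ring.descPochhammer_eq_factorial_smul_choose, ← aeval_eq_smeval,
    ← descPochhammer_map (algebraMap ℤ ℚ), comp_eq_aeval, aeval_map_algebraMap]

theorem degree_binomialPoly (k : ℕ) : (binomialPoly k).degree = k := by
  rw [binomialPoly, smul_eq_C_mul, degree_C_mul (by positivity),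
    degree_eq_natDegree (monic_descPochhammer ℚ k).ne_zero, descPochhammer_natDegree]

theorem degree_choose_X_add_C (a : ℚ) (k : ℕ) :
    (Ring.choose (X + C a : ℚ[X]) k).degree = k := by
  rw [← binomialPoly_comp, ← taylor_apply, degree_taylor, degree_binomialPoly]

theorem Pni_eq_choose_mul_choose (n i : ℕ) :
    Pni n i = Ring.choose ((X : ℚ[X]) + i - 1) i * Ring.choose (X + C (n : ℚ)) (n - i) := by
  rw [Pni, binomialPoly_comp, binomialPoly_comp, Ring.choose_neg, Units.smul_def,
    Int.coe_negOnePow_natCast, zsmul_eq_mul, smul_eq_C_mul]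
  simp only [map_pow, map_neg, map_one, Int.cast_pow, Int.cast_neg, Int.cast_one]
  rw [← mul_assoc, ← mul_assoc, ← pow_add, Even.neg_one_pow ⟨i, rfl⟩, one_mul]

theorem Pni_eq_sum_smul_choose (n i : ℕ) (h : i ≤ n) :
    Pni n i = ∑ j ∈ range (i + 1),
      ((-1 : ℚ) ^ j * (n - j).choose (i - j)) • Ring.choose (X + C (n : ℚ)) (n - j) := by
  rw [Pni_eq_choose_mul_choose, C_eq_natCast, ← Ring.alternating_sum_choose_mul_choose_add X h]
  simp only [Algebra.smul_def, map_mul, map_pow, map_neg, map_one, map_natCast]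

theorem sum_smul_Pni_eq_sum_smul_choose (n : ℕ) (α : ℕ → ℚ) :
    ∑ i ∈ range (n + 1), α i • Pni n i = ∑ k ∈ range (n + 1),
      ((-1) ^ (n - k) * ∑ i ∈ Icc (n - k) n, α i * k.choose (i - (n - k))) •
        Ring.choose (X + C (n : ℚ)) k :=
  calc ∑ i ∈ range (n + 1), α i • Pni n i
      = ∑ i ∈ range (n + 1), ∑ j ∈ range (i + 1),
          (α i * ((-1) ^ j * (n - j).choose (i - j))) • Ring.choose (X + C (n : ℚ)) (n - j) :=
        sum_congr rfl fun i hi => by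
          rw [Pni_eq_sum_smul_choose n i (mem_range_succ_iff.1 hi), smul_sum]
          simp only [smul_smul]
    _ = ∑ j ∈ range (n + 1), ∑ i ∈ Icc j n,
          (α i * ((-1) ^ j * (n - j).choose (i - j))) • Ring.choose (X + C (n : ℚ)) (n - j) :=
        sum_comm' fun i j => by simp only [mem_range, mem_Icc]; omega
    _ = _ := by
          rw [← sum_range_reflect]
          refine sum_congr rfl fun k hk => ?_
          rw [add_tsub_cancel_right, Nat.sub_sub_self (mem_range_succ_iff.1 hk), ← sum_smul,
            mul_sum]
          simp only [mul_left_comm]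

/-- Let `b ≤ n` and `P = Σ_{i=0}^n α_i P_{n,i}`. Then `P` has degree at most `n - b`
if and only if `Σ_{i=j}^{n} α_i · binom(n-j, i-j) = 0` for every `0 ≤ j ≤ b-1`. -/
theorem Pni_degree_le_iff' (n b : ℕ) (hb : b ≤ n) (α : ℕ → ℚ) :
    (∑ i ∈ Finset.range (n + 1), α i • Pni n i).degree ≤ ((n - b : ℕ) : WithBot ℕ) ↔
    ∀ j < b, ∑ i ∈ Finset.Icc j n, α i * ((n - j).choose (i - j) : ℚ) = 0 := by
  rw [sum_smul_Pni_eq_sum_smul_choose,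
    degree_sum_range_smul_le_iff (degree_choose_X_add_C _)]
  constructor
  · intro h j hj
    simpa [Nat.sub_sub_self (hj.le.trans hb)] using h (n - j) (by omega) (by omega)
  · intro h k hk hbk
    have hS := h (n - k) (by omega)
    rw [Nat.sub_sub_self (Nat.lt_succ_iff.1 hk)] at hS
    rw [hS, mul_zero]
end

section
/- Let m ≤ M be integers, let X and Y be subsets of the integer interval [m,M], let s be the number of elements of [m,M] not in Y, and let e_1 < ⋯ < e_s be these elements listed in increasing order; set y_i = e_i + 1 for 1 ≤ i ≤ s (the strand starts of Y other than y_0 = m). Then (X,Y) is a balanced pair with respect to [m,M] if and only if the following three conditions hold: m belongs to X; X has at least s + 1 elements; and, listing the elements of X in increasing order as d_0 < d_1 < d_2 < ⋯, one has d_i < y_i for every i with 1 ≤ i ≤ s. -/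
private lemma downclosed_eq_range (T : Finset ℕ)
    (h : ∀ j k, j < k → k ∈ T → j ∈ T) : T = Finset.range T.card := by
  have hsub : T ⊆ Finset.range T.card := by
    intro k hk
    have hIic : Finset.Iic k ⊆ T := by
      intro j hj
      rcases lt_or_eq_of_le (Finset.mem_Iic.mp hj) with h1 | h1
      · exact h j k h1 hk
      · exact h1 ▸ hk
    have hcard := Finset.card_le_card hIic
    rw [Nat.card_Iic] at hcard
    exact Finset.mem_range.mpr hcard
  exact Finset.eq_of_subset_of_card_le hsub (by simp)

private lemma filter_card_eq (n : ℕ) (f : ℕ → ℤ)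
    (hmono : ∀ k l, k < l → l < n → f k < f l)
    (S : Finset ℤ) (hmem : ∀ z, z ∈ S ↔ ∃ k < n, f k = z) (u : ℤ) :
    (S.filter (fun z => z ≤ u)).card
      = ((Finset.range n).filter (fun k => f k ≤ u)).card := by
  classical
  have himg : S.filter (fun z => z ≤ u)
      = ((Finset.range n).filter (fun k => f k ≤ u)).image f := by
    ext z
    simp only [Finset.mem_filter, Finset.mem_image, Finset.mem_range, hmem]
    constructor
    · rintro ⟨⟨k, hk, rfl⟩, hz⟩; exact ⟨k, ⟨hk, hz⟩, rfl⟩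
    · rintro ⟨k, ⟨hk, hz⟩, rfl⟩; exact ⟨⟨k, hk, rfl⟩, hz⟩
  rw [himg, Finset.card_image_of_injOn]
  intro k hk l hl hkl
  simp only [Finset.coe_filter, Set.mem_setOf_eq, Finset.mem_range] at hk hl
  rcases lt_trichotomy k l with h | h | h
  · exact absurd hkl (ne_of_lt (hmono k l h hl.1))
  · exact h
  · exact absurd hkl.symm (ne_of_lt (hmono l k h hk.1))

/-- Let `X, Y ⊆ [m,M]`, let `s` be the number of elements of `[m,M]` not in `Y`, let
`e 0 < ⋯ < e (s-1)` enumerate these elements in increasing order (so the strand starts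
of `Y` other than `m` are `y i = e (i-1) + 1` for `1 ≤ i ≤ s`), and let
`d 0 < d 1 < ⋯` enumerate the elements of `X` in increasing order. Then `(X,Y)` is a
balanced pair with respect to `[m,M]` if and only if: `m ∈ X`, `X` has at least `s + 1`
elements, and `d i < y i` for every `1 ≤ i ≤ s`. -/
theorem balanced_iff (m M : ℤ) (hmM : m ≤ M) (X Y : Finset ℤ)
    (hX : X ⊆ Finset.Icc m M) (hY : Y ⊆ Finset.Icc m M)
    (s : ℕ) (hs : s = (Finset.Icc m M \ Y).card)
    (e : ℕ → ℤ) (he_mono : ∀ k l, k < l → l < s → e k < e l)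
    (he_mem : ∀ z : ℤ, z ∈ Finset.Icc m M \ Y ↔ ∃ k < s, e k = z)
    (d : ℕ → ℤ) (hd_mono : ∀ k l, k < l → l < X.card → d k < d l)
    (hd_mem : ∀ z : ℤ, z ∈ X ↔ ∃ k < X.card, d k = z) :
    (∀ u : ℤ, m ≤ u → u ≤ M →
        ((Finset.Icc m u).filter (fun z => z ∉ Y)).card <
        ((Finset.Icc m u).filter (fun z => z ∈ X)).card) ↔
    (m ∈ X ∧ s + 1 ≤ X.card ∧ ∀ i, 1 ≤ i → i ≤ s → d i < e (i - 1) + 1) := by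
  classical
  set E : Finset ℤ := Finset.Icc m M \ Y with hE
  -- elements of E and X lie in [m, M]
  have heIcc : ∀ k, k < s → m ≤ e k ∧ e k ≤ M := by
    intro k hk
    have : e k ∈ E := (he_mem (e k)).mpr ⟨k, hk, rfl⟩
    have := Finset.mem_sdiff.mp this
    exact Finset.mem_Icc.mp this.1
  have hdIcc : ∀ k, k < X.card → m ≤ d k ∧ d k ≤ M := by
    intro k hk
    have : d k ∈ X := (hd_mem (d k)).mpr ⟨k, hk, rfl⟩
    exact Finset.mem_Icc.mp (hX this)
  -- rewrite the balanced condition in terms of index counts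
  have hYfilt : ∀ u : ℤ, u ≤ M →
      (Finset.Icc m u).filter (fun z => z ∉ Y) = E.filter (fun z => z ≤ u) := by
    intro u hu
    ext z
    simp only [Finset.mem_filter, Finset.mem_Icc, hE, Finset.mem_sdiff]
    constructor
    · rintro ⟨⟨h1, h2⟩, h3⟩; exact ⟨⟨⟨h1, le_trans h2 hu⟩, h3⟩, h2⟩
    · rintro ⟨⟨⟨h1, _⟩, h3⟩, h2⟩; exact ⟨⟨h1, h2⟩, h3⟩
  have hXfilt : ∀ u : ℤ,
      (Finset.Icc m u).filter (fun z => z ∈ X) = X.filter (fun z => z ≤ u) := by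
    intro u
    ext z
    simp only [Finset.mem_filter, Finset.mem_Icc]
    constructor
    · rintro ⟨⟨_, h2⟩, h3⟩; exact ⟨h3, h2⟩
    · rintro ⟨h3, h2⟩; exact ⟨⟨(Finset.mem_Icc.mp (hX h3)).1, h2⟩, h3⟩
  have hA : ∀ u : ℤ, (E.filter (fun z => z ≤ u)).card
      = ((Finset.range s).filter (fun k => e k ≤ u)).card := by
    intro u
    exact filter_card_eq s e he_mono E (fun z => he_mem z) u
  have hB : ∀ u : ℤ, (X.filter (fun z => z ≤ u)).card
      = ((Finset.range X.card).filter (fun k => d k ≤ u)).card := by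
    intro u
    exact filter_card_eq X.card d hd_mono X (fun z => hd_mem z) u
  -- the filtered index sets are down-closed
  have hTe : ∀ u : ℤ, (Finset.range s).filter (fun k => e k ≤ u)
      = Finset.range ((Finset.range s).filter (fun k => e k ≤ u)).card := by
    intro u
    apply downclosed_eq_range
    intro j k hjk hk
    simp only [Finset.mem_filter, Finset.mem_range] at hk ⊢
    exact ⟨lt_trans hjk hk.1, le_of_lt (lt_of_lt_of_le (he_mono j k hjk hk.1) hk.2)⟩
  have hTd : ∀ u : ℤ, (Finset.range X.card).filter (fun k => d k ≤ u)
      = Finset.range ((Finset.range X.card).filter (fun k => d k ≤ u)).card := by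
    intro u
    apply downclosed_eq_range
    intro j k hjk hk
    simp only [Finset.mem_filter, Finset.mem_range] at hk ⊢
    exact ⟨lt_trans hjk hk.1, le_of_lt (lt_of_lt_of_le (hd_mono j k hjk hk.1) hk.2)⟩
  constructor
  · -- forward direction
    intro hbal
    have hmem_m : m ∈ X := by
      have h := hbal m le_rfl hmM
      have hpos : 0 < ((Finset.Icc m m).filter (fun z => z ∈ X)).card :=
        lt_of_le_of_lt (Nat.zero_le _) h
      obtain ⟨z, hz⟩ := Finset.card_pos.mp hpos
      simp only [Finset.mem_filter, Finset.mem_Icc] at hz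
      have : z = m := le_antisymm hz.1.2 hz.1.1
      exact this ▸ hz.2
    have hXcard : s + 1 ≤ X.card := by
      have h := hbal M hmM le_rfl
      rw [hYfilt M le_rfl, hXfilt M, hA, hB] at h
      have h1 : (Finset.range s).filter (fun k => e k ≤ M) = Finset.range s := by
        apply Finset.filter_true_of_mem
        intro k hk
        exact (heIcc k (Finset.mem_range.mp hk)).2
      rw [h1, Finset.card_range] at h
      have h2 : ((Finset.range X.card).filter (fun k => d k ≤ M)).card ≤ X.card := by
        calc ((Finset.range X.card).filter (fun k => d k ≤ M)).card
            ≤ (Finset.range X.card).card := Finset.card_le_card (Finset.filter_subset _ _)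
          _ = X.card := Finset.card_range _
      omega
    refine ⟨hmem_m, hXcard, ?_⟩
    intro i hi1 his
    have hi1s : i - 1 < s := by omega
    set u := e (i - 1) with hu
    have humem := heIcc (i - 1) hi1s
    have h := hbal u humem.1 humem.2
    rw [hYfilt u humem.2, hXfilt u, hA, hB] at h
    -- A u ≥ i
    have hAi : i ≤ ((Finset.range s).filter (fun k => e k ≤ u)).card := by
      have hsub : Finset.range i ⊆ (Finset.range s).filter (fun k => e k ≤ u) := by
        intro k hk
        have hk' := Finset.mem_range.mp hk
        simp only [Finset.mem_filter, Finset.mem_range]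
        refine ⟨by omega, ?_⟩
        rcases lt_or_eq_of_le (Nat.le_sub_one_of_lt hk') with hlt | heq
        · exact le_of_lt (he_mono k (i-1) hlt hi1s)
        · exact le_of_eq (by rw [heq])
      calc i = (Finset.range i).card := (Finset.card_range i).symm
        _ ≤ _ := Finset.card_le_card hsub
    have hBi : i + 1 ≤ ((Finset.range X.card).filter (fun k => d k ≤ u)).card := by omega
    have : i ∈ (Finset.range X.card).filter (fun k => d k ≤ u) := by
      rw [hTd u]
      exact Finset.mem_range.mpr (by omega)
    simp only [Finset.mem_filter] at this
    omega
  · -- backward direction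
    rintro ⟨hmX, hXcard, hdlt⟩ u hmu huM
    rw [hYfilt u huM, hXfilt u, hA, hB]
    set a := ((Finset.range s).filter (fun k => e k ≤ u)).card with ha
    have has : a ≤ s := by
      calc a ≤ (Finset.range s).card := Finset.card_le_card (Finset.filter_subset _ _)
        _ = s := Finset.card_range s
    -- d 0 = m
    have hd0 : d 0 = m := by
      obtain ⟨j, hj, hjm⟩ := (hd_mem m).mp hmX
      have h0X : (0 : ℕ) < X.card := by omega
      have hd0m : d 0 ≤ m := by
        rcases Nat.eq_zero_or_pos j with h | h
        · rw [← hjm, h]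
        · exact le_of_lt (hjm ▸ hd_mono 0 j h hj)
      exact le_antisymm hd0m (hdIcc 0 h0X).1
    -- e k ≤ u for k < a
    have hek : ∀ k, k < a → e k ≤ u := by
      intro k hk
      have : k ∈ (Finset.range s).filter (fun k => e k ≤ u) := by
        rw [hTe u]; exact Finset.mem_range.mpr hk
      exact (Finset.mem_filter.mp this).2
    have hsub : Finset.Iic a ⊆ (Finset.range X.card).filter (fun k => d k ≤ u) := by
      intro k hk
      have hka := Finset.mem_Iic.mp hk
      simp only [Finset.mem_filter, Finset.mem_range]
      refine ⟨by omega, ?_⟩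
      rcases Nat.eq_zero_or_pos k with h | h
      · rw [h, hd0]; exact hmu
      · have hks : k ≤ s := le_trans hka has
        have hdk : d k ≤ e (k - 1) := by
          have := hdlt k h hks
          omega
        have hek' : e (k - 1) ≤ u := hek (k - 1) (by omega)
        exact le_trans hdk hek'
    calc a < a + 1 := Nat.lt_succ_self a
      _ = (Finset.Iic a).card := (Nat.card_Iic a).symm
      _ ≤ _ := Finset.card_le_card hsub
end
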